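/- arXiv:2110.00915 — 5 statements merged into one kernel-verified Lean document; each statement's English description precedes it below -/
import Mathlib

section
/- Let x be a closed-loop trajectory of the sampled-data control-affine system. If h(x(0)) ≥ 0 and for every k ∈ ℕ and every t ∈ (t_k, t_{k+1}) one has ξ(x(t), u_k) ≥ 0, i.e. L_f h(x(t)) + L_g h(x(t)) u_k + γ h(x(t)) ≥ 0, then h(x(t)) ≥ 0 for all t ≥ 0. -/
/-! Along the trajectory, `z(s) = exp(γ s) h(x(s))` has derivative `exp(γ s) ξ(x(s), u_k) ≥ 0`
between consecutive sampling instants, so `z` is nondecreasing on each `[t_k, t_{k+1}]`, hence on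
`[0, ∞)` because `t_k → ∞`. Thus `exp(γ s) h(x(s)) ≥ h(x(0)) ≥ 0`. -/

open Set Filter

noncomputable section

abbrev E (n : ℕ) : Type := EuclideanSpace ℝ (Fin n)

/-- `ξ(x,u) = L_f h(x) + L_g h(x) u + γ h(x)`, where `L_f h(x) = ∇h(x)·f(x)` and
`L_g h(x) u = ∇h(x)·(g(x)u)`. -/
noncomputable def xi {n m : ℕ} (f : E n → E n) (g : E n → E m →L[ℝ] E n)
    (h : E n → ℝ) (γ : ℝ) (p : E n) (v : E m) : ℝ :=
  fderiv ℝ h p (f p) + fderiv ℝ h p (g p v) + γ * h p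

section PiecewiseMonotone

variable {α β : Type*} [LinearOrder α] [Preorder β] {f : α → β} {t : ℕ → α}

theorem monotoneOn_Icc_zero_of_monotoneOn_Icc_succ (ht : Monotone t)
    (hf : ∀ k, MonotoneOn f (Icc (t k) (t (k + 1)))) (k : ℕ) :
    MonotoneOn f (Icc (t 0) (t k)) := by
  induction k with
  | zero => simp only [Icc_self, monotoneOn_singleton]
  | succ k ih =>
    have h0k : t 0 ≤ t k := ht k.zero_le
    have hkk : t k ≤ t (k + 1) := ht k.le_succ
    rw [← Icc_union_Icc_eq_Icc h0k hkk]
    exact ih.union_right (hf k) (isGreatest_Icc h0k) (isLeast_Icc hkk)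

theorem monotoneOn_Ici_of_monotoneOn_Icc_succ (ht : Monotone t) (htop : Tendsto t atTop atTop)
    (hf : ∀ k, MonotoneOn f (Icc (t k) (t (k + 1)))) :
    MonotoneOn f (Ici (t 0)) := by
  intro a ha b hb hab
  obtain ⟨k, hk⟩ := (htop.eventually_ge_atTop b).exists
  exact monotoneOn_Icc_zero_of_monotoneOn_Icc_succ ht hf k ⟨ha, hab.trans hk⟩ ⟨hb, hk⟩ hab

end PiecewiseMonotone

section ExpWeighted

variable {F : Type*} [NormedAddCommGroup F] [NormedSpace ℝ F] {h : F → ℝ} {φ : ℝ → F} {γ : ℝ}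

theorem hasDerivAt_exp_mul_comp {v : F} {s : ℝ} (hh : DifferentiableAt ℝ h (φ s))
    (hφ : HasDerivAt φ v s) :
    HasDerivAt (fun τ => Real.exp (γ * τ) * h (φ τ))
      (Real.exp (γ * s) * (fderiv ℝ h (φ s) v + γ * h (φ s))) s := by
  have hexp : HasDerivAt (fun τ => Real.exp (γ * τ)) (Real.exp (γ * s) * γ) s := by
    simpa using ((hasDerivAt_id s).const_mul γ).exp
  have hcomp : HasDerivAt (fun τ => h (φ τ)) (fderiv ℝ h (φ s) v) s :=
    hh.hasFDerivAt.comp_hasDerivAt s hφ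
  exact (hexp.mul hcomp).congr_deriv (by ring)

theorem monotoneOn_exp_mul_comp {a b : ℝ} {v : ℝ → F} (hh : Differentiable ℝ h)
    (hφc : ContinuousOn φ (Icc a b)) (hφ : ∀ s ∈ Ioo a b, HasDerivAt φ (v s) s)
    (hineq : ∀ s ∈ Ioo a b, 0 ≤ fderiv ℝ h (φ s) (v s) + γ * h (φ s)) :
    MonotoneOn (fun τ => Real.exp (γ * τ) * h (φ τ)) (Icc a b) := by
  have hderiv (s) (hs : s ∈ interior (Icc a b)) := by
    rw [interior_Icc] at hs
    exact hasDerivAt_exp_mul_comp (γ := γ) (hh (φ s)) (hφ s hs)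
  refine monotoneOn_of_deriv_nonneg (convex_Icc a b) ?_
    (fun s hs => (hderiv s hs).differentiableAt.differentiableWithinAt) ?_
  · exact (Real.continuous_exp.comp (continuous_const_mul γ)).continuousOn.mul
      (hh.continuous.comp_continuousOn hφc)
  · intro s hs
    rw [(hderiv s hs).deriv]
    rw [interior_Icc] at hs
    exact mul_nonneg (Real.exp_nonneg _) (hineq s hs)

end ExpWeighted

theorem xi_eq_fderiv_add {n m : ℕ} (f : E n → E n) (g : E n → E m →L[ℝ] E n)
    (h : E n → ℝ) (γ : ℝ) (p : E n) (v : E m) :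
    xi f g h γ p v = fderiv ℝ h p (f p + g p v) + γ * h p := by
  rw [xi, map_add]

theorem stmt_1_general {n m : ℕ} (f : E n → E n) (g : E n → E m →L[ℝ] E n)
    (h : E n → ℝ) (hh : ContDiff ℝ 1 h) (γ : ℝ)
    (t : ℕ → ℝ) (ht0 : t 0 = 0) (htmono : StrictMono t)
    (httop : Tendsto t atTop atTop)
    (u : ℕ → E m)
    (x : ℝ → E n) (hxc : ContinuousOn x (Ici (0 : ℝ)))
    (hode : ∀ k, ∀ s ∈ Ioo (t k) (t (k + 1)),
      HasDerivAt x (f (x s) + g (x s) (u k)) s)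
    (hinit : 0 ≤ h (x 0))
    (hsafe : ∀ k, ∀ s ∈ Ioo (t k) (t (k + 1)), 0 ≤ xi f g h γ (x s) (u k)) :
    ∀ s, 0 ≤ s → 0 ≤ h (x s) := by
  have hpiece (k : ℕ) :
      MonotoneOn (fun τ => Real.exp (γ * τ) * h (x τ)) (Icc (t k) (t (k + 1))) := by
    have hsub : Icc (t k) (t (k + 1)) ⊆ Ici 0 := fun s hs =>
      (ht0 ▸ htmono.monotone k.zero_le).trans hs.1
    refine monotoneOn_exp_mul_comp (hh.differentiable one_ne_zero) (hxc.mono hsub) (hode k) ?_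
    simpa only [xi_eq_fderiv_add] using hsafe k
  have hmono := monotoneOn_Ici_of_monotoneOn_Icc_succ htmono.monotone httop hpiece
  rw [ht0] at hmono
  intro s hs
  have hz := hmono self_mem_Ici hs hs
  simp only [mul_zero, Real.exp_zero, one_mul] at hz
  exact (mul_nonneg_iff_of_pos_left (Real.exp_pos _)).1 (hinit.trans hz)

/-- Continuous-time invariance from the inter-sample CBF inequality: if `h(x(0)) ≥ 0` and
`ξ(x(t), u_k) ≥ 0` for all `k` and all `t ∈ (t_k, t_{k+1})`, then `h(x(t)) ≥ 0` for all
`t ≥ 0` along the closed-loop sampled-data trajectory. -/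
theorem stmt_1 {n m : ℕ} (f : E n → E n) (g : E n → E m →L[ℝ] E n)
    (hf : LocallyLipschitz f) (hg : LocallyLipschitz g)
    (U : Set (E m)) (h : E n → ℝ) (hh : ContDiff ℝ 1 h) (γ : ℝ) (hγ : 0 < γ)
    (t : ℕ → ℝ) (ht0 : t 0 = 0) (htmono : StrictMono t)
    (httop : Tendsto t atTop atTop)
    (u : ℕ → E m) (hu : ∀ k, u k ∈ U)
    (x : ℝ → E n) (hxc : ContinuousOn x (Ici (0 : ℝ)))
    (hode : ∀ k, ∀ s ∈ Ioo (t k) (t (k + 1)),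
      HasDerivAt x (f (x s) + g (x s) (u k)) s)
    (hinit : 0 ≤ h (x 0))
    (hsafe : ∀ k, ∀ s ∈ Ioo (t k) (t (k + 1)), 0 ≤ xi f g h γ (x s) (u k)) :
    ∀ s, 0 ≤ s → 0 ≤ h (x s) :=
  stmt_1_general f g h hh γ t ht0 htmono httop u x hxc hode hinit hsafe
end
end

section
/- (Corollary 1, Taylor-model margin with an arbitrary lower bound.) Let x be a closed-loop trajectory of the sampled-data control-affine system with h(x(0)) ≥ 0. Suppose that for each k ∈ ℕ there exist a set S_k ⊆ ℝⁿ with x(t) ∈ S_k for all t ∈ [t_k, t_{k+1}], a point (x_k*, u_k*) ∈ S_k × U, a function P_k : ℝⁿ × ℝᵐ → ℝ (the Taylor polynomial) and real numbers I̲_k (lower bound of the remainder interval) and φ̲_k such that: (i) ξ(x′, u) − ξ(x_k, u) ≥ P_k(x′ − x_k*, u − u_k*) + I̲_k for every (x′, u) ∈ S_k × U; (ii) φ̲_k ≤ P_k(x′ − x_k*, u − u_k*) for every (x′, u) ∈ S_k × U; and (iii) the applied input satisfies u_k ∈ U and ξ(x_k, u_k) + I̲_k + φ̲_k ≥ 0.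 Then h(x(t)) ≥ 0 for all t ≥ 0. -/
open Set Filter

noncomputable section

/-! The margin condition makes `ξ(x(s), u_k) ≥ 0` along the whole `k`-th sampling interval,
i.e. `d/ds h(x(s)) ≥ -γ h(x(s))` there. Hence `s ↦ exp(γ s) h(x(s))` is nondecreasing on each
interval, so nonnegativity of `h ∘ x` propagates from `t_k` to `[t_k, t_{k+1}]`, and by induction
to all of `[0, ∞)` because `t_k → ∞`. -/

theorem Monotone.forall_ge_of_Icc_step {α : Type*} [LinearOrder α] {t : ℕ → α}
    (ht : Monotone t) (htop : Tendsto t atTop atTop) {p : α → Prop} (h0 : p (t 0))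
    (hstep : ∀ k, p (t k) → ∀ s ∈ Icc (t k) (t (k + 1)), p s) :
    ∀ s, t 0 ≤ s → p s := by
  have hIcc : ∀ k, ∀ s ∈ Icc (t 0) (t k), p s := by
    intro k
    induction k with
    | zero => rintro s ⟨hs₁, hs₂⟩; rwa [le_antisymm hs₂ hs₁]
    | succ k ih =>
      rintro s ⟨hs₁, hs₂⟩
      rcases le_or_gt s (t k) with hsk | hks
      · exact ih s ⟨hs₁, hsk⟩
      · exact hstep k (ih (t k) ⟨ht (Nat.zero_le k), le_rfl⟩) s ⟨hks.le, hs₂⟩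
  intro s hs
  obtain ⟨k, hk⟩ := (htop.eventually (eventually_ge_atTop s)).exists
  exact hIcc k s ⟨hs, hk⟩

theorem nonneg_of_hasDerivAt_add_mul_nonneg {φ φ' : ℝ → ℝ} {a b γ : ℝ}
    (hc : ContinuousOn φ (Icc a b)) (hd : ∀ s ∈ Ioo a b, HasDerivAt φ (φ' s) s)
    (hφ' : ∀ s ∈ Ioo a b, 0 ≤ φ' s + γ * φ s) (ha : 0 ≤ φ a) :
    ∀ s ∈ Icc a b, 0 ≤ φ s := by
  have hmono : MonotoneOn (fun s => Real.exp (γ * s) * φ s) (Icc a b) := by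
    refine monotoneOn_of_hasDerivWithinAt_nonneg (convex_Icc a b)
      (f' := fun s => Real.exp (γ * s) * (φ' s + γ * φ s))
      ((Real.continuous_exp.comp (continuous_const_mul γ)).continuousOn.mul hc)
      (fun s hs => ?_) (fun s hs => ?_)
    · rw [interior_Icc] at hs
      have hexp : HasDerivAt (fun s => Real.exp (γ * s)) (Real.exp (γ * s) * γ) s :=
        ((hasDerivAt_id s).const_mul γ).exp.congr_deriv (by simp)
      exact ((hexp.mul (hd s hs)).congr_deriv (by ring)).hasDerivWithinAt
    · rw [interior_Icc] at hs
      exact mul_nonneg (Real.exp_pos _).le (hφ' s hs)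
  intro s hs
  have hy : Real.exp (γ * a) * φ a ≤ Real.exp (γ * s) * φ s :=
    hmono (left_mem_Icc.2 (hs.1.trans hs.2)) hs hs.1
  exact nonneg_of_mul_nonneg_right
    ((mul_nonneg (Real.exp_pos _).le ha).trans hy) (Real.exp_pos _)

theorem nonneg_on_Icc_of_xi_nonneg {n m : ℕ} {f : E n → E n} {g : E n → E m →L[ℝ] E n}
    {h : E n → ℝ} (hh : Differentiable ℝ h) {γ : ℝ} {x : ℝ → E n} {v : E m} {a b : ℝ}
    (hxc : ContinuousOn x (Icc a b))
    (hode : ∀ s ∈ Ioo a b, HasDerivAt x (f (x s) + g (x s) v) s)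
    (hxi : ∀ s ∈ Ioo a b, 0 ≤ xi f g h γ (x s) v) (ha : 0 ≤ h (x a)) :
    ∀ s ∈ Icc a b, 0 ≤ h (x s) :=
  nonneg_of_hasDerivAt_add_mul_nonneg (φ := fun s => h (x s)) (γ := γ)
    (hh.continuous.comp_continuousOn hxc)
    (fun s hs => (hh (x s)).hasFDerivAt.comp_hasDerivAt s (hode s hs))
    (fun s hs => by simpa only [xi, map_add, add_assoc] using hxi s hs) ha

theorem stmt_3_general {n m : ℕ} (f : E n → E n) (g : E n → E m →L[ℝ] E n)
    (U : Set (E m)) (h : E n → ℝ) (hh : ContDiff ℝ 1 h) (γ : ℝ)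
    (t : ℕ → ℝ) (ht0 : t 0 = 0) (htmono : StrictMono t)
    (httop : Tendsto t atTop atTop)
    (u : ℕ → E m)
    (x : ℝ → E n) (hxc : ContinuousOn x (Ici (0 : ℝ)))
    (hode : ∀ k, ∀ s ∈ Ioo (t k) (t (k + 1)),
      HasDerivAt x (f (x s) + g (x s) (u k)) s)
    (hinit : 0 ≤ h (x 0))
    (S : ℕ → Set (E n))
    (xstar : ℕ → E n) (ustar : ℕ → E m)
    (P : ℕ → E n → E m → ℝ) (Ilow : ℕ → ℝ) (φlow : ℕ → ℝ)
    (hreach : ∀ k, ∀ s ∈ Icc (t k) (t (k + 1)), x s ∈ S k)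
    (htaylor : ∀ k, ∀ x' ∈ S k, ∀ v ∈ U,
      P k (x' - xstar k) (v - ustar k) + Ilow k
        ≤ xi f g h γ x' v - xi f g h γ (x (t k)) v)
    (hpolylb : ∀ k, ∀ x' ∈ S k, ∀ v ∈ U,
      φlow k ≤ P k (x' - xstar k) (v - ustar k))
    (huU : ∀ k, u k ∈ U)
    (hcbf : ∀ k, 0 ≤ xi f g h γ (x (t k)) (u k) + Ilow k + φlow k) :
    ∀ s, 0 ≤ s → 0 ≤ h (x s) := by
  have ht_nonneg : ∀ k, 0 ≤ t k := fun k => ht0 ▸ htmono.monotone (Nat.zero_le k)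
  have hxi : ∀ k, ∀ s ∈ Ioo (t k) (t (k + 1)), 0 ≤ xi f g h γ (x s) (u k) := by
    intro k s hs
    have hS := hreach k s (Ioo_subset_Icc_self hs)
    linarith [htaylor k _ hS (u k) (huU k), hpolylb k _ hS (u k) (huU k), hcbf k]
  intro s hs
  refine htmono.monotone.forall_ge_of_Icc_step httop (p := fun s => 0 ≤ h (x s))
    (by rwa [ht0]) (fun k hk => ?_) s (by rwa [ht0])
  exact nonneg_on_Icc_of_xi_nonneg (hh.differentiable one_ne_zero)
    (hxc.mono fun s hs => (ht_nonneg k).trans hs.1) (hode k) (hxi k) hk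

/-- Corollary 1 (Taylor-model margin with an arbitrary lower bound): if on each sampling
interval the trajectory stays in `S k`, the increment `ξ(x',u) - ξ(x_k,u)` is bounded below
by a Taylor model `P k (x' - x_k*) (u - u_k*) + I̲ k` on `S k × U`, `φ̲ k` is any lower
bound of the Taylor polynomial on `S k × U`, and the applied input satisfies
`ξ(x_k, u_k) + I̲ k + φ̲ k ≥ 0`, then `h(x(t)) ≥ 0` for all `t ≥ 0` whenever
`h(x(0)) ≥ 0`. -/
theorem stmt_3 {n m : ℕ} (f : E n → E n) (g : E n → E m →L[ℝ] E n)
    (hf : LocallyLipschitz f) (hg : LocallyLipschitz g)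
    (U : Set (E m)) (h : E n → ℝ) (hh : ContDiff ℝ 1 h) (γ : ℝ) (hγ : 0 < γ)
    (t : ℕ → ℝ) (ht0 : t 0 = 0) (htmono : StrictMono t)
    (httop : Tendsto t atTop atTop)
    (u : ℕ → E m)
    (x : ℝ → E n) (hxc : ContinuousOn x (Ici (0 : ℝ)))
    (hode : ∀ k, ∀ s ∈ Ioo (t k) (t (k + 1)),
      HasDerivAt x (f (x s) + g (x s) (u k)) s)
    (hinit : 0 ≤ h (x 0))
    (S : ℕ → Set (E n))
    (xstar : ℕ → E n) (ustar : ℕ → E m)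
    (P : ℕ → E n → E m → ℝ) (Ilow : ℕ → ℝ) (φlow : ℕ → ℝ)
    (hreach : ∀ k, ∀ s ∈ Icc (t k) (t (k + 1)), x s ∈ S k)
    (hstar : ∀ k, xstar k ∈ S k ∧ ustar k ∈ U)
    (htaylor : ∀ k, ∀ x' ∈ S k, ∀ v ∈ U,
      P k (x' - xstar k) (v - ustar k) + Ilow k
        ≤ xi f g h γ x' v - xi f g h γ (x (t k)) v)
    (hpolylb : ∀ k, ∀ x' ∈ S k, ∀ v ∈ U,
      φlow k ≤ P k (x' - xstar k) (v - ustar k))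
    (huU : ∀ k, u k ∈ U)
    (hcbf : ∀ k, 0 ≤ xi f g h γ (x (t k)) (u k) + Ilow k + φlow k) :
    ∀ s, 0 ≤ s → 0 ≤ h (x s) :=
  stmt_3_general f g U h hh γ t ht0 htmono httop u x hxc hode hinit S xstar ustar P Ilow φlow hreach
    htaylor hpolylb huU hcbf
end
end

section
/- (Cascaded comparison lemma.) Let r ≥ 1, let λ_1, …, λ_r > 0, and let s_0, …, s_{r−1} : [0,∞) → ℝ be continuous functions. Suppose there is a countable set D ⊂ (0,∞) such that each s_k is differentiable at every t ∈ (0,∞) \ D and, for every such t: s_k(t) = s_{k−1}′(t) + λ_k s_{k−1}(t) for k = 1, …, r−1, and s_{r−1}′(t) + λ_r s_{r−1}(t) ≥ 0. If s_k(0) ≥ 0 for every k = 0, …, r−1, then s_0(t) ≥ 0 for all t ≥ 0. -/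
/-!
Multiplying by `exp (λ t)` turns `s' + λ s ≥ 0` into monotonicity of `exp (λ t) s`, so `s ≥ 0`
whenever `s 0 ≥ 0`. Applied to `s_{r-1}` this gives `s_{r-1} ≥ 0`, that is
`s_{r-2}' + λ_{r-1} s_{r-2} ≥ 0`, and so on down to `s_0`.

Monotonicity survives a countable exceptional set `D`: for `ε > 0` the function `g + ε t` has
positive derivative off `D`. If it decreased from `a` to `b`, pick a level `c` between its values
at `b` and at `a` outside the countable set `(g + ε t) '' D`; the last point of `[a, b]` where
this level is attained lies outside `D`, and the positive derivative there pushes the function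
above `c` to its right, so `c` is attained once more further right.
-/

open Set Filter Topology

theorem HasDerivAt.eventually_nhdsGT_lt_of_pos {f : ℝ → ℝ} {f' x : ℝ} (hf : HasDerivAt f f' x)
    (hf' : 0 < f') : ∀ᶠ y in 𝓝[>] x, f x < f y := by
  have hslope : Tendsto (slope f x) (𝓝[>] x) (𝓝 f') :=
    (hasDerivAt_iff_tendsto_slope.1 hf).mono_left (nhdsGT_le_nhdsNE x)
  filter_upwards [hslope.eventually (eventually_gt_nhds hf'), self_mem_nhdsWithin] with y hy hxy
  exact (slope_pos_iff hxy).1 hy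

theorem le_of_eventually_nhdsGT_lt_off_countable {g : ℝ → ℝ} {a b : ℝ} {D : Set ℝ}
    (hab : a ≤ b) (hD : D.Countable) (hg : ContinuousOn g (Icc a b))
    (hgrow : ∀ x ∈ Ioo a b \ D, ∀ᶠ y in 𝓝[>] x, g x < g y) : g a ≤ g b := by
  by_contra! hba
  obtain ⟨c, hc, hcD⟩ : ∃ c ∈ Ioo (g b) (g a), c ∉ g '' D := by
    by_contra! hsub
    exact hba.not_ge (Cardinal.Real.Ioo_countable_iff.1 ((hD.image g).mono hsub))
  have hc_mem : c ∈ g '' Icc a b := intermediate_value_Icc' hab hg (Ioo_subset_Icc_self hc)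
  obtain ⟨x, ⟨hx_mem, hgx⟩, hx_last⟩ : ∃ x, IsGreatest (Icc a b ∩ g ⁻¹' {c}) x :=
    (isCompact_Icc.of_isClosed_subset (hg.preimage_isClosed_of_isClosed isClosed_Icc
      isClosed_singleton) inter_subset_left).exists_isGreatest hc_mem
  have hgx : g x = c := hgx
  have hxa : a < x := hx_mem.1.lt_of_ne (by rintro rfl; exact hc.2.ne' hgx)
  have hxb : x < b := hx_mem.2.lt_of_ne (by rintro rfl; exact hc.1.ne hgx)
  have hxD : x ∉ D := fun hx => hcD ⟨x, hx, hgx⟩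
  obtain ⟨y, hgy, hxy, hyb⟩ :=
    ((hgrow x ⟨⟨hxa, hxb⟩, hxD⟩).and (Ioo_mem_nhdsGT hxb)).exists
  obtain ⟨z, hz, hgz⟩ := intermediate_value_Icc' hyb.le
    (hg.mono (Icc_subset_Icc (hxa.trans hxy).le le_rfl)) ⟨hc.1.le, hgx ▸ hgy.le⟩
  exact (hxy.trans_le hz.1).not_ge
    (hx_last ⟨⟨hxa.le.trans (hxy.le.trans hz.1), hz.2⟩, hgz⟩)

theorem le_of_deriv_nonneg_off_countable {g : ℝ → ℝ} {a b : ℝ} {D : Set ℝ}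
    (hab : a ≤ b) (hD : D.Countable) (hg : ContinuousOn g (Icc a b))
    (hdiff : ∀ x ∈ Ioo a b \ D, DifferentiableAt ℝ g x)
    (hderiv : ∀ x ∈ Ioo a b \ D, 0 ≤ deriv g x) : g a ≤ g b := by
  have hperturbed : ∀ ε > 0, g a + ε * a ≤ g b + ε * b := fun ε hε =>
    le_of_eventually_nhdsGT_lt_off_countable (g := fun t => g t + ε * t) hab hD
      (hg.add (continuousOn_const.mul continuousOn_id)) fun x hx =>
        ((hdiff x hx).hasDerivAt.add ((hasDerivAt_id x).const_mul ε)).eventually_nhdsGT_lt_of_pos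
          (by simpa using add_pos_of_nonneg_of_pos (hderiv x hx) hε)
  refine le_of_forall_pos_le_add fun δ hδ => ?_
  have hε : 0 < δ / (b - a + 1) := div_pos hδ (by linarith)
  have hεδ : δ / (b - a + 1) * (b - a) ≤ δ := by
    rw [div_mul_eq_mul_div, div_le_iff₀ (by linarith)]
    nlinarith
  linarith [hperturbed _ hε]

theorem monotoneOn_of_deriv_nonneg_off_countable {g : ℝ → ℝ} {s D : Set ℝ} (hs : Convex ℝ s)
    (hD : D.Countable) (hg : ContinuousOn g s)
    (hdiff : ∀ x ∈ interior s \ D, DifferentiableAt ℝ g x)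
    (hderiv : ∀ x ∈ interior s \ D, 0 ≤ deriv g x) : MonotoneOn g s := by
  intro a ha b hb hab
  have hIcc : Icc a b ⊆ s := hs.ordConnected.out ha hb
  have hIoo : Ioo a b \ D ⊆ interior s \ D := fun x hx =>
    ⟨interior_mono hIcc (by rw [interior_Icc]; exact hx.1), hx.2⟩
  exact le_of_deriv_nonneg_off_countable hab hD (hg.mono hIcc) (fun x hx => hdiff x (hIoo hx))
    fun x hx => hderiv x (hIoo hx)

theorem nonneg_of_deriv_add_mul_nonneg_off_countable {f : ℝ → ℝ} {lam a : ℝ} {D : Set ℝ}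
    (hD : D.Countable) (hf : ContinuousOn f (Ici a))
    (hdiff : ∀ t ∈ Ioi a \ D, DifferentiableAt ℝ f t)
    (hineq : ∀ t ∈ Ioi a \ D, 0 ≤ deriv f t + lam * f t) (ha : 0 ≤ f a) :
    ∀ t ∈ Ici a, 0 ≤ f t := by
  have hderiv : ∀ t ∈ Ioi a \ D, HasDerivAt (fun u => Real.exp (lam * u) * f u)
      (Real.exp (lam * t) * (deriv f t + lam * f t)) t := fun t ht => by
    refine ((((hasDerivAt_id t).const_mul lam).exp).mul (hdiff t ht).hasDerivAt).congr_deriv ?_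
    simp only [id, mul_one]
    ring
  have hmono : MonotoneOn (fun u => Real.exp (lam * u) * f u) (Ici a) := by
    refine monotoneOn_of_deriv_nonneg_off_countable (convex_Ici a) hD
      ((Real.continuous_exp.comp (continuous_const_mul lam)).continuousOn.mul hf) ?_ ?_ <;>
      rw [interior_Ici]
    · exact fun t ht => (hderiv t ht).differentiableAt
    · exact fun t ht => (hderiv t ht).deriv ▸ mul_nonneg (Real.exp_pos _).le (hineq t ht)
  intro t ht
  have hexp : 0 ≤ Real.exp (lam * a) * f a := mul_nonneg (Real.exp_pos _).le ha
  exact nonneg_of_mul_nonneg_right (hexp.trans (hmono self_mem_Ici ht ht)) (Real.exp_pos _)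

theorem stmt_4_general (r : ℕ) (hr : 1 ≤ r) (lam : ℕ → ℝ)
    (s : ℕ → ℝ → ℝ)
    (hcont : ∀ k < r, ContinuousOn (s k) (Ici (0 : ℝ)))
    (D : Set ℝ) (hDcount : D.Countable)
    (hdiff : ∀ k < r, ∀ t ∈ Ioi (0 : ℝ) \ D, DifferentiableAt ℝ (s k) t)
    (hrec : ∀ k, 1 ≤ k → k ≤ r - 1 → ∀ t ∈ Ioi (0 : ℝ) \ D,
      s k t = deriv (s (k - 1)) t + lam k * s (k - 1) t)
    (htop : ∀ t ∈ Ioi (0 : ℝ) \ D,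
      0 ≤ deriv (s (r - 1)) t + lam r * s (r - 1) t)
    (hinit : ∀ k < r, 0 ≤ s k 0) :
    ∀ t, 0 ≤ t → 0 ≤ s 0 t := by
  have hnonneg : ∀ k ≤ r - 1, ∀ t ∈ Ici (0 : ℝ), 0 ≤ s k t := by
    intro k hk
    induction hk using Nat.decreasingInduction with
    | self =>
      exact nonneg_of_deriv_add_mul_nonneg_off_countable hDcount (hcont _ (by omega))
        (hdiff _ (by omega)) htop (hinit _ (by omega))
    | of_succ k hk ih =>
      refine nonneg_of_deriv_add_mul_nonneg_off_countable (lam := lam (k + 1)) hDcount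
        (hcont k (by omega)) (hdiff k (by omega)) (fun t ht => ?_) (hinit k (by omega))
      simpa only [hrec (k + 1) (by omega) hk t ht, Nat.add_sub_cancel] using
        ih t (Ioi_subset_Ici_self ht.1)
  exact fun t ht => hnonneg 0 (Nat.zero_le _) t ht

/-- Cascaded (higher-order) comparison lemma: let `s 0, …, s (r-1)` be continuous on
`[0,∞)`, differentiable on `(0,∞)` outside a countable set `D`, and suppose that at every
such point `s k = (s (k-1))' + λ_k * s (k-1)` for `k = 1, …, r-1` and
`(s (r-1))' + λ_r * s (r-1) ≥ 0`. If `s k 0 ≥ 0` for all `k = 0, …, r-1`, then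
`s 0 t ≥ 0` for all `t ≥ 0`. -/
theorem stmt_4 (r : ℕ) (hr : 1 ≤ r) (lam : ℕ → ℝ)
    (hlam : ∀ k, 1 ≤ k → k ≤ r → 0 < lam k)
    (s : ℕ → ℝ → ℝ)
    (hcont : ∀ k < r, ContinuousOn (s k) (Ici (0 : ℝ)))
    (D : Set ℝ) (hDcount : D.Countable) (hDsub : D ⊆ Ioi (0 : ℝ))
    (hdiff : ∀ k < r, ∀ t ∈ Ioi (0 : ℝ) \ D, DifferentiableAt ℝ (s k) t)
    (hrec : ∀ k, 1 ≤ k → k ≤ r - 1 → ∀ t ∈ Ioi (0 : ℝ) \ D,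
      s k t = deriv (s (k - 1)) t + lam k * s (k - 1) t)
    (htop : ∀ t ∈ Ioi (0 : ℝ) \ D,
      0 ≤ deriv (s (r - 1)) t + lam r * s (r - 1) t)
    (hinit : ∀ k < r, 0 ≤ s k 0) :
    ∀ t, 0 ≤ t → 0 ≤ s 0 t :=
  stmt_4_general r hr lam s hcont D hDcount hdiff hrec htop hinit
end

section
/- Let f : ℝⁿ → ℝⁿ be of class C^{r−1}, g : ℝⁿ → ℝ^{n×m}, and h : ℝⁿ → ℝ of class C^r with relative degree r with respect to (f,g), i.e. L_g L_f^k h(x) = ∇(L_f^k h)(x)ᵀ g(x) = 0 for all x ∈ ℝⁿ and all k = 0, …, r−2. Fix λ_1, …, λ_r > 0, let a = (a_1, …, a_r) with a_i the i-th elementary symmetric polynomial of λ_1, …, λ_r, let η(x) = (L_f^{r−1}h(x), L_f^{r−2}h(x), …, h(x))ᵀ, and define s_0 = h, s_k = L_f s_{k−1} + λ_k s_{k−1} for k = 1, …, r−1. Then for every x ∈ ℝⁿ and every u ∈ ℝᵐ: L_f s_{r−1}(x) + L_g s_{r−1}(x)·u + λ_r s_{r−1}(x) = L_f^r h(x) +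 L_g L_f^{r−1} h(x)·u + aᵀη(x). -/
open Set

noncomputable section

/-- Iterated Lie derivative along `f`: `L_f^0 h = h`, `L_f^{k+1} h (x) = ∇(L_f^k h)(x)·f(x)`. -/
noncomputable def lieIter {n : ℕ} (f : E n → E n) (h : E n → ℝ) : ℕ → E n → ℝ
  | 0 => h
  | k + 1 => fun p => fderiv ℝ (lieIter f h k) p (f p)

/-- The cascaded functions `s_0 = h`, `s_k = L_f s_{k-1} + λ_k s_{k-1}` (using `lam k` as
`λ_k`). -/
noncomputable def cascade {n : ℕ} (f : E n → E n) (h : E n → ℝ) (lam : ℕ → ℝ) :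
    ℕ → E n → ℝ
  | 0 => h
  | k + 1 => fun p =>
      fderiv ℝ (cascade f h lam k) p (f p) + lam (k + 1) * cascade f h lam k p

/-- `esym lam k j` is the `j`-th elementary symmetric polynomial `e_j(λ_1, …, λ_k)`
(so `esym lam k 0 = 1`). -/
noncomputable def esym (lam : ℕ → ℝ) (k j : ℕ) : ℝ :=
  ∑ S ∈ (Finset.Icc 1 k).powersetCard j, ∏ i ∈ S, lam i

/-! By induction on `k`, `s_k = ∑_{i ≤ k} e_{k-i}(λ_1, …, λ_k) L_f^i h`: the inductive step is
the recurrence `e_{j+1}(λ_1, …, λ_{k+1}) = e_{j+1}(λ_1, …, λ_k) + λ_{k+1} e_j(λ_1, …, λ_k)`,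
and needs `L_f^i h` differentiable for `i < k`. Then `L_f s_{r-1} + λ_r s_{r-1}` is `s_r` itself,
and in `L_g s_{r-1}` only the top term `L_g L_f^{r-1} h` survives, by the relative degree. -/

theorem Multiset.esymm_cons_succ {R : Type*} [CommSemiring R] (a : R) (s : Multiset R) (j : ℕ) :
    (a ::ₘ s).esymm (j + 1) = s.esymm (j + 1) + a * s.esymm j := by
  simp [Multiset.esymm, Multiset.map_map, Multiset.sum_map_mul_left]

lemma esym_eq_esymm (lam : ℕ → ℝ) (k j : ℕ) :
    esym lam k j = ((Finset.Icc 1 k).val.map lam).esymm j :=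
  (Finset.esymm_map_val lam _ j).symm

lemma esym_zero_right (lam : ℕ → ℝ) (k : ℕ) : esym lam k 0 = 1 := by
  simp [esym]

lemma esym_eq_zero_of_lt (lam : ℕ → ℝ) {k j : ℕ} (h : k < j) : esym lam k j = 0 := by
  rw [esym, Finset.powersetCard_eq_empty.mpr (by simpa using h), Finset.sum_empty]

lemma esym_succ_succ (lam : ℕ → ℝ) (k j : ℕ) :
    esym lam (k + 1) (j + 1) = esym lam k (j + 1) + lam (k + 1) * esym lam k j := by
  rw [esym_eq_esymm, ← Finset.insert_Icc_right_eq_Icc_add_one (by omega),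
    Finset.insert_val_of_notMem (by simp), Multiset.map_cons, Multiset.esymm_cons_succ,
    esym_eq_esymm, esym_eq_esymm]

/-- Coefficient form of `(X + λ_{k+1}) ∏_{i ≤ k} (X + λ_i) = ∏_{i ≤ k+1} (X + λ_i)`. -/
lemma sum_esym_mul_shift_add (lam : ℕ → ℝ) (k : ℕ) (L : ℕ → ℝ) :
    ∑ i ∈ Finset.range (k + 1), esym lam k (k - i) * L (i + 1)
      + lam (k + 1) * ∑ i ∈ Finset.range (k + 1), esym lam k (k - i) * L i
    = ∑ i ∈ Finset.range (k + 2), esym lam (k + 1) (k + 1 - i) * L i := by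
  have hshift : ∑ i ∈ Finset.range (k + 1), esym lam k (k - i) * L (i + 1)
      = ∑ i ∈ Finset.range (k + 1), esym lam k (k + 1 - i) * L i + L (k + 1) := calc
    _ = ∑ i ∈ Finset.range (k + 2), esym lam k (k + 1 - i) * L i := by
      rw [Finset.sum_range_succ' _ (k + 1), Nat.sub_zero, esym_eq_zero_of_lt lam k.lt_succ_self,
        zero_mul, add_zero]
      simp only [Nat.add_sub_add_right]
    _ = _ := by rw [Finset.sum_range_succ, Nat.sub_self, esym_zero_right, one_mul]
  rw [hshift, Finset.sum_range_succ _ (k + 1), Nat.sub_self, esym_zero_right, one_mul,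
    Finset.mul_sum, add_right_comm, ← Finset.sum_add_distrib]
  congr 1
  refine Finset.sum_congr rfl fun i hi => ?_
  rw [show k + 1 - i = k - i + 1 by have := Finset.mem_range.mp hi; omega, esym_succ_succ]
  ring

lemma fderiv_sum_const_mul_apply {F : Type*} [NormedAddCommGroup F] [NormedSpace ℝ F]
    {ι : Type*} (s : Finset ι) (c : ι → ℝ) {φ : ι → F → ℝ} {p : F}
    (hφ : ∀ i ∈ s, DifferentiableAt ℝ (φ i) p) (w : F) :
    fderiv ℝ (fun q => ∑ i ∈ s, c i * φ i q) p w =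
      ∑ i ∈ s, c i * fderiv ℝ (φ i) p w := by
  rw [fderiv_fun_sum fun i hi => (hφ i hi).const_mul (c i), sum_apply]
  refine Finset.sum_congr rfl fun i hi => ?_
  rw [fderiv_const_mul (hφ i hi), smul_apply, smul_eq_mul]

section Cascade

variable {n : ℕ} {f : E n → E n} {h : E n → ℝ}

lemma contDiff_lieIter {N : ℕ} (hf : ContDiff ℝ N f) (hh : ContDiff ℝ (N + 1 : ℕ) h)
    {i : ℕ} (hi : i ≤ N + 1) : ContDiff ℝ (N + 1 - i : ℕ) (lieIter f h i) := by
  induction i with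
  | zero => simpa [lieIter] using hh
  | succ i ih =>
    have hf' : ContDiff ℝ (N + 1 - (i + 1) : ℕ) f := hf.of_le (by norm_cast; omega)
    exact ((ih (by omega)).fderiv_right (by norm_cast; omega)).clm_apply hf'

lemma differentiable_lieIter {N : ℕ} (hf : ContDiff ℝ N f) (hh : ContDiff ℝ (N + 1 : ℕ) h)
    {i : ℕ} (hi : i ≤ N) : Differentiable ℝ (lieIter f h i) :=
  (contDiff_lieIter hf hh (by omega)).differentiable (by norm_cast; omega)

lemma cascade_eq_sum_esym_mul_lieIter (lam : ℕ → ℝ) {k : ℕ}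
    (hdiff : ∀ i < k, Differentiable ℝ (lieIter f h i)) :
    cascade f h lam k =
      fun p => ∑ i ∈ Finset.range (k + 1), esym lam k (k - i) * lieIter f h i p := by
  induction k with
  | zero => funext p; simp [cascade, lieIter, esym_zero_right]
  | succ k ih =>
    funext p
    have hdiffAt : ∀ i ∈ Finset.range (k + 1), DifferentiableAt ℝ (lieIter f h i) p :=
      fun i hi => (hdiff i (by simpa using hi)).differentiableAt
    rw [cascade, ih fun i hi => hdiff i (by omega)]
    beta_reduce
    rw [fderiv_sum_const_mul_apply _ _ hdiffAt]
    exact sum_esym_mul_shift_add lam k fun i => lieIter f h i p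

lemma fderiv_cascade_apply_eq_fderiv_lieIter (lam : ℕ → ℝ) {k : ℕ}
    (hdiff : ∀ i ≤ k, Differentiable ℝ (lieIter f h i)) {p w : E n}
    (hw : ∀ i < k, fderiv ℝ (lieIter f h i) p w = 0) :
    fderiv ℝ (cascade f h lam k) p w = fderiv ℝ (lieIter f h k) p w := by
  rw [cascade_eq_sum_esym_mul_lieIter lam fun i hi => hdiff i hi.le,
    fderiv_sum_const_mul_apply _ _
      fun i hi => (hdiff i (by simpa [Nat.lt_succ_iff] using hi)).differentiableAt,
    Finset.sum_range_succ,
    Finset.sum_eq_zero fun i hi => by rw [hw i (by simpa using hi), mul_zero],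
    Nat.sub_self, esym_zero_right, zero_add, one_mul]

end Cascade

theorem stmt_6_general {n m : ℕ} (r : ℕ) (hr : 1 ≤ r)
    (f : E n → E n) (hf : ContDiff ℝ (r - 1 : ℕ) f)
    (g : E n → E m →L[ℝ] E n)
    (h : E n → ℝ) (hh : ContDiff ℝ (r : ℕ) h)
    (lam : ℕ → ℝ)
    (hreldeg : ∀ k, k + 2 ≤ r → ∀ p : E n, ∀ v : E m,
      fderiv ℝ (lieIter f h k) p (g p v) = 0) :
    ∀ (p : E n) (v : E m),
      fderiv ℝ (cascade f h lam (r - 1)) p (f p)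
          + fderiv ℝ (cascade f h lam (r - 1)) p (g p v)
          + lam r * cascade f h lam (r - 1) p
        = lieIter f h r p + fderiv ℝ (lieIter f h (r - 1)) p (g p v)
          + ∑ i ∈ Finset.range r, esym lam r (r - i) * lieIter f h i p := by
  obtain ⟨k, rfl⟩ : ∃ k, r = k + 1 := ⟨r - 1, by omega⟩
  rw [Nat.add_sub_cancel] at hf ⊢
  intro p v
  have hdiff : ∀ i ≤ k, Differentiable ℝ (lieIter f h i) :=
    fun i hi => differentiable_lieIter hf hh hi
  have hcascade : fderiv ℝ (cascade f h lam k) p (f p) + lam (k + 1) * cascade f h lam k p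
      = lieIter f h (k + 1) p
        + ∑ i ∈ Finset.range (k + 1), esym lam (k + 1) (k + 1 - i) * lieIter f h i p := by
    change cascade f h lam (k + 1) p = _
    rw [cascade_eq_sum_esym_mul_lieIter lam fun i hi => hdiff i (by omega)]
    beta_reduce
    rw [Finset.sum_range_succ _ (k + 1), Nat.sub_self, esym_zero_right, one_mul, add_comm]
  have hcontrol : fderiv ℝ (cascade f h lam k) p (g p v) = fderiv ℝ (lieIter f h k) p (g p v) :=
    fderiv_cascade_apply_eq_fderiv_lieIter lam hdiff fun i hi => hreldeg i (by omega) p v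
  rw [hcontrol]
  linear_combination hcascade

/-- If `h` has relative degree `r` with respect to `(f,g)` (i.e. `L_g L_f^k h ≡ 0` for
`k = 0, …, r-2`), then one application of `(L_f + L_g(·)u + λ_r)` to the cascaded function
`s_{r-1}` equals the higher-order CBF expression
`L_f^r h(x) + L_g L_f^{r-1} h(x) u + aᵀη(x)`, where `a_i = e_i(λ_1, …, λ_r)` and
`aᵀη(x) = Σ_{i=0}^{r-1} e_{r-i}(λ_1, …, λ_r) · L_f^i h(x)`. -/
theorem stmt_6 {n m : ℕ} (r : ℕ) (hr : 1 ≤ r)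
    (f : E n → E n) (hf : ContDiff ℝ (r - 1 : ℕ) f)
    (g : E n → E m →L[ℝ] E n)
    (h : E n → ℝ) (hh : ContDiff ℝ (r : ℕ) h)
    (lam : ℕ → ℝ) (hlam : ∀ i, 1 ≤ i → i ≤ r → 0 < lam i)
    (hreldeg : ∀ k, k + 2 ≤ r → ∀ p : E n, ∀ v : E m,
      fderiv ℝ (lieIter f h k) p (g p v) = 0) :
    ∀ (p : E n) (v : E m),
      fderiv ℝ (cascade f h lam (r - 1)) p (f p)
          + fderiv ℝ (cascade f h lam (r - 1)) p (g p v)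
          + lam r * cascade f h lam (r - 1) p
        = lieIter f h r p + fderiv ℝ (lieIter f h (r - 1)) p (g p v)
          + ∑ i ∈ Finset.range r, esym lam r (r - i) * lieIter f h i p :=
  stmt_6_general r hr f hf g h hh lam hreldeg
end
end

section
/- (Safety of the USDCBF-QP controller, relative degree 1, under measurement and actuation uncertainties.) Let x be a closed-loop trajectory of the sampled-data control-affine system. Let ε_x, ε_u > 0. Suppose that for each k ∈ ℕ there exist a state estimate x̂_k ∈ ℝⁿ with ‖x(t_k) − x̂_k‖₂ ≤ ε_x, a set Ŝ_k ⊆ ℝⁿ with x(t) ∈ Ŝ_k for all t ∈ [t_k, t_{k+1}], a real margin φ̂_k with ξ(x′, u) − ξ(x̂_k, u) ≥ φ̂_k for every x′ ∈ Ŝ_k and every u ∈ U, and a desired input u^d_k such that every u ∈ ℝᵐ with ‖u − u^d_k‖₂ ≤ ε_u satisfies u ∈ U and ξ(x̂_k, u) + φ̂_k ≥ 0, i.e. L_f h(x̂_k) + L_g h(x̂_k) u + γ h(x̂_k) + φ̂_k ≥ 0. Suppose the actually applied input satisfies ‖u_k − u^d_k‖₂ ≤ ε_u for every k, and that h(x)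 ≥ 0 for every x ∈ ℝⁿ with ‖x − x̂_0‖₂ ≤ ε_x. Then h(x(t)) ≥ 0 for all t ≥ 0. -/
open Set Filter

noncomputable section

section Barrier

variable {F : Type*} [NormedAddCommGroup F] [NormedSpace ℝ F] {h : F → ℝ} {x w : ℝ → F}
  {a b γ : ℝ}

theorem HasDerivAt.comp_mul_exp {τ : ℝ} (hh : DifferentiableAt ℝ h (x τ))
    (hx : HasDerivAt x (w τ) τ) :
    HasDerivAt (fun s => h (x s) * Real.exp (γ * s))
      (Real.exp (γ * τ) * (fderiv ℝ h (x τ) (w τ) + γ * h (x τ))) τ := by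
  have hexp : HasDerivAt (fun s => Real.exp (γ * s)) (Real.exp (γ * τ) * γ) τ := by
    simpa only [mul_one] using ((hasDerivAt_id' τ).const_mul γ).exp
  have hcomp : HasDerivAt (fun s => h (x s)) (fderiv ℝ h (x τ) (w τ)) τ :=
    hh.hasFDerivAt.comp_hasDerivAt τ hx
  exact (hcomp.mul hexp).congr_deriv (by ring)

theorem monotoneOn_mul_exp_of_deriv_add_mul_nonneg (hh : Differentiable ℝ h)
    (hx : ContinuousOn x (Icc a b)) (hderiv : ∀ s ∈ Ioo a b, HasDerivAt x (w s) s)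
    (hbarrier : ∀ s ∈ Ioo a b, 0 ≤ fderiv ℝ h (x s) (w s) + γ * h (x s)) :
    MonotoneOn (fun s => h (x s) * Real.exp (γ * s)) (Icc a b) := by
  refine monotoneOn_of_hasDerivWithinAt_nonneg (convex_Icc a b)
    (f' := fun s => Real.exp (γ * s) * (fderiv ℝ h (x s) (w s) + γ * h (x s)))
    ((hh.continuous.comp_continuousOn hx).mul (by fun_prop)) (fun s hs => ?_) (fun s hs => ?_)
  · rw [interior_Icc] at hs ⊢
    exact ((hderiv s hs).comp_mul_exp (hh _)).hasDerivWithinAt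
  · rw [interior_Icc] at hs
    exact mul_nonneg (Real.exp_nonneg _) (hbarrier s hs)

end Barrier

theorem le_of_monotoneOn_Icc_succ {α β : Type*} [Preorder α] [LinearOrder β] [NoMaxOrder β]
    {y : β → α} {t : ℕ → β} (ht : Monotone t) (httop : Tendsto t atTop atTop)
    (hy : ∀ k, MonotoneOn y (Icc (t k) (t (k + 1)))) {s : β} (hs : t 0 ≤ s) :
    y (t 0) ≤ y s := by
  have hyt : ∀ k, y (t 0) ≤ y (t k) := by
    intro k
    induction k with
    | zero => exact le_rfl
    | succ k ih =>
      have htk := ht k.le_succ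
      exact ih.trans (hy k (left_mem_Icc.2 htk) (right_mem_Icc.2 htk) htk)
  obtain ⟨N, hN⟩ := (httop.eventually (eventually_gt_atTop s)).exists
  obtain ⟨k, -, hsk⟩ := mem_iUnion₂.1 (Ico_subset_biUnion_Ico N t ⟨hs, hN⟩)
  exact (hyt k).trans
    (hy k (left_mem_Icc.2 (hsk.1.trans hsk.2.le)) (Ico_subset_Icc_self hsk) hsk.1)

theorem stmt_10_general {n m : ℕ} (f : E n → E n) (g : E n → E m →L[ℝ] E n)
    (U : Set (E m)) (h : E n → ℝ) (hh : ContDiff ℝ 1 h) (γ : ℝ)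
    (t : ℕ → ℝ) (ht0 : t 0 = 0) (htmono : StrictMono t)
    (httop : Tendsto t atTop atTop)
    (u : ℕ → E m)
    (x : ℝ → E n) (hxc : ContinuousOn x (Ici (0 : ℝ)))
    (hode : ∀ k, ∀ s ∈ Ioo (t k) (t (k + 1)),
      HasDerivAt x (f (x s) + g (x s) (u k)) s)
    (εx εu : ℝ)
    (xhat : ℕ → E n) (hmeas : ∀ k, ‖x (t k) - xhat k‖ ≤ εx)
    (Shat : ℕ → Set (E n))
    (hreach : ∀ k, ∀ s ∈ Icc (t k) (t (k + 1)), x s ∈ Shat k)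
    (φhat : ℕ → ℝ)
    (hmargin : ∀ k, ∀ x' ∈ Shat k, ∀ v ∈ U,
      φhat k ≤ xi f g h γ x' v - xi f g h γ (xhat k) v)
    (ud : ℕ → E m)
    (hdes : ∀ k, ∀ v : E m, ‖v - ud k‖ ≤ εu →
      v ∈ U ∧ 0 ≤ xi f g h γ (xhat k) v + φhat k)
    (hact : ∀ k, ‖u k - ud k‖ ≤ εu)
    (hinit : ∀ p : E n, ‖p - xhat 0‖ ≤ εx → 0 ≤ h p) :
    ∀ s, 0 ≤ s → 0 ≤ h (x s) := by
  have hxi : ∀ k, ∀ s ∈ Icc (t k) (t (k + 1)), 0 ≤ xi f g h γ (x s) (u k) := by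
    intro k s hs
    obtain ⟨hU, hξ⟩ := hdes k (u k) (hact k)
    linarith [hmargin k (x s) (hreach k s hs) (u k) hU]
  have hmono : ∀ k, MonotoneOn (fun s => h (x s) * Real.exp (γ * s)) (Icc (t k) (t (k + 1))) :=
    fun k => monotoneOn_mul_exp_of_deriv_add_mul_nonneg (hh.differentiable one_ne_zero)
      (hxc.mono fun s hs => ht0 ▸ (htmono.monotone k.zero_le).trans hs.1) (hode k)
      fun s hs => xi_eq_fderiv_add f g h γ (x s) (u k) ▸ hxi k s (Ioo_subset_Icc_self hs)
  intro s hs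
  have hy0 : 0 ≤ h (x (t 0)) * Real.exp (γ * t 0) :=
    mul_nonneg (hinit _ (hmeas 0)) (Real.exp_nonneg _)
  have hys := hy0.trans (le_of_monotoneOn_Icc_succ htmono.monotone httop hmono (ht0 ▸ hs))
  exact nonneg_of_mul_nonneg_left hys (Real.exp_pos _)

/-- Safety of the USDCBF-QP controller (relative degree 1) under measurement and actuation
uncertainties: with state estimates `x̂ k` accurate to `ε_x`, reachable-tube
over-approximations `Ŝ k`, margins `φ̂ k`, and desired inputs `ud k` such that every input
within `ε_u` of `ud k` lies in `U` and satisfies `ξ(x̂_k, ·) + φ̂ k ≥ 0`, the actually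
applied inputs `u k` (within `ε_u` of `ud k`) keep `h(x(t)) ≥ 0` for all `t ≥ 0`,
provided `h ≥ 0` on the `ε_x`-ball around the initial estimate `x̂ 0`. -/
theorem stmt_10 {n m : ℕ} (f : E n → E n) (g : E n → E m →L[ℝ] E n)
    (hf : LocallyLipschitz f) (hg : LocallyLipschitz g)
    (U : Set (E m)) (h : E n → ℝ) (hh : ContDiff ℝ 1 h) (γ : ℝ) (hγ : 0 < γ)
    (t : ℕ → ℝ) (ht0 : t 0 = 0) (htmono : StrictMono t)
    (httop : Tendsto t atTop atTop)
    (u : ℕ → E m)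
    (x : ℝ → E n) (hxc : ContinuousOn x (Ici (0 : ℝ)))
    (hode : ∀ k, ∀ s ∈ Ioo (t k) (t (k + 1)),
      HasDerivAt x (f (x s) + g (x s) (u k)) s)
    (εx εu : ℝ) (hεx : 0 < εx) (hεu : 0 < εu)
    (xhat : ℕ → E n) (hmeas : ∀ k, ‖x (t k) - xhat k‖ ≤ εx)
    (Shat : ℕ → Set (E n))
    (hreach : ∀ k, ∀ s ∈ Icc (t k) (t (k + 1)), x s ∈ Shat k)
    (φhat : ℕ → ℝ)
    (hmargin : ∀ k, ∀ x' ∈ Shat k, ∀ v ∈ U,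
      φhat k ≤ xi f g h γ x' v - xi f g h γ (xhat k) v)
    (ud : ℕ → E m)
    (hdes : ∀ k, ∀ v : E m, ‖v - ud k‖ ≤ εu →
      v ∈ U ∧ 0 ≤ xi f g h γ (xhat k) v + φhat k)
    (hact : ∀ k, ‖u k - ud k‖ ≤ εu)
    (hinit : ∀ p : E n, ‖p - xhat 0‖ ≤ εx → 0 ≤ h p) :
    ∀ s, 0 ≤ s → 0 ≤ h (x s) :=
  stmt_10_general f g U h hh γ t ht0 htmono httop u x hxc hode εx εu xhat hmeas Shat hreach φhat
    hmargin ud hdes hact hinit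
end
end
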